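/- arXiv:math/0311210 — 4 statements merged into one kernel-verified Lean document; each statement's English description precedes it below -/
import Mathlib

section
/- Let K be a field, V a K-vector space, T : V → V a linear endomorphism, and W ⊆ V a T-invariant subspace. Suppose the restriction of T to W is diagonalizable (i.e., W is spanned by eigenvectors of T) and the induced endomorphism of V/W is diagonalizable. Then V is the sum of its generalized eigenspaces for T; more precisely, every vector of V is annihilated by a product of operators of the form (T − λ)² with λ ∈ K. Moreover, for each eigenvalue h, the h-eigenspace of V/W is the image of the generalized h-eigenspace of V under the quotient map. -/
section Aux

variable {K : Type*} [Field K] {M : Type*} [AddCommGroup M] [Module K M]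

/-- Product of operators `f - μ • 1` over a list of scalars. -/
private def lprod (f : Module.End K M) (s : List K) : Module.End K M :=
  (s.map (fun μ => f - μ • (1 : Module.End K M))).prod

private lemma comm_single (f : Module.End K M) (μ ν : K) :
    Commute (f - μ • (1 : Module.End K M)) (f - ν • (1 : Module.End K M)) := by
  unfold Commute SemiconjBy
  simp only [sub_mul, mul_sub, smul_mul_assoc, mul_smul_comm, one_mul, mul_one, smul_smul,
    smul_sub]
  rw [mul_comm ν μ]
  abel

private lemma comm_lprod (f : Module.End K M) (μ : K) (s : List K) :
    Commute (f - μ • (1 : Module.End K M)) (lprod f s) := by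
  apply Commute.list_prod_right
  intro y hy
  obtain ⟨ν, -, rfl⟩ := List.mem_map.mp hy
  exact comm_single f μ ν

private lemma lprod_comm (f : Module.End K M) (s t : List K) :
    Commute (lprod f s) (lprod f t) := by
  apply Commute.list_prod_left
  intro y hy
  obtain ⟨ν, -, rfl⟩ := List.mem_map.mp hy
  exact comm_lprod f ν t

private lemma lprod_append (f : Module.End K M) (s t : List K) :
    lprod f (s ++ t) = lprod f s * lprod f t := by
  simp [lprod]

private lemma lprod_sq (f : Module.End K M) (s : List K) :
    (s.map (fun μ => (f - μ • (1 : Module.End K M)) ^ 2)).prod = lprod f s * lprod f s := by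
  induction s with
  | nil => simp [lprod]
  | cons a s ih =>
    have hcomm := comm_lprod f a s
    simp only [List.map_cons, List.prod_cons, ih]
    show (f - a • 1) ^ 2 * (lprod f s * lprod f s) = _
    have : lprod f (a :: s) = (f - a • 1) * lprod f s := by simp [lprod]
    rw [this, pow_two, Commute.mul_mul_mul_comm hcomm.symm]

/-- If every element of `S` is an eigenvector of `f`, then every element of the span of `S`
is annihilated by a finite product of operators `f - μ • 1`. -/
private lemma lprod_ann_of_span (f : Module.End K M) (S : Set M)
    (hS : ∀ v ∈ S, ∃ μ : K, f v = μ • v) {x : M} (hx : x ∈ Submodule.span K S) :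
    ∃ s : List K, lprod f s x = 0 := by
  induction hx using Submodule.span_induction with
  | mem v hv =>
    obtain ⟨μ, hμ⟩ := hS v hv
    refine ⟨[μ], ?_⟩
    simp [lprod, hμ, LinearMap.sub_apply]
  | zero => exact ⟨[], by simp⟩
  | add x y hx hy ihx ihy =>
    obtain ⟨s, hs⟩ := ihx
    obtain ⟨t, ht⟩ := ihy
    refine ⟨s ++ t, ?_⟩
    rw [lprod_append, Module.End.mul_apply, map_add, ht, add_zero, ← Module.End.mul_apply,
      (lprod_comm f s t).eq, Module.End.mul_apply, hs, map_zero]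
  | smul a x hx ihx =>
    obtain ⟨s, hs⟩ := ihx
    exact ⟨s, by rw [map_smul, hs, smul_zero]⟩

private lemma pow_on_eigvec (f : Module.End K M) (μ h : K) (y : M) (hy : f y = μ • y) (k : ℕ) :
    ((f - h • (1 : Module.End K M)) ^ k) y = (μ - h) ^ k • y := by
  induction k with
  | zero => simp
  | succ k ih =>
    have h1 : (f - h • (1 : Module.End K M)) y = (μ - h) • y := by
      simp [LinearMap.sub_apply, hy, sub_smul]
    rw [pow_succ, Module.End.mul_apply, h1, map_smul, ih, smul_smul, pow_succ,
      mul_comm ((μ - h) ^ k) (μ - h)]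

/-- In an `iSupIndep` family of submodules, a finitely supported family whose sum vanishes
is identically zero. -/
private lemma eq_zero_of_indep {ι : Type*} (p : ι → Submodule K M) (hp : iSupIndep p)
    (d : ι →₀ M) (hd : ∀ i, d i ∈ p i) (hsum : (d.sum fun _ x => x) = 0) (i : ι) : d i = 0 := by
  classical
  by_cases hi : i ∈ d.support
  · have h1 : d i + ∑ j ∈ d.support.erase i, d j = 0 := by
      rw [Finset.add_sum_erase _ _ hi]; exact hsum
    have h2 : d i ∈ ⨆ (j) (_ : j ≠ i), p j := by
      have he : d i = -∑ j ∈ d.support.erase i, d j := eq_neg_of_add_eq_zero_left h1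
      rw [he]
      exact Submodule.neg_mem _ (Submodule.sum_mem _ fun j hj =>
        Submodule.mem_iSup_of_mem j (Submodule.mem_iSup_of_mem (Finset.ne_of_mem_erase hj)
          (hd j)))
    exact (Submodule.disjoint_def.mp (hp i)) _ (hd i) h2
  · exact Finsupp.notMem_support_iff.mp hi

/-- A generalized eigenvector of a diagonalizable endomorphism is an eigenvector. -/
private lemma eig_of_gen_of_diag (f : Module.End K M)
    (hdiag : (⊤ : Submodule K M) = Submodule.span K {v : M | ∃ μ : K, f v = μ • v})
    (h : K) (x : M) (k : ℕ) (hx : ((f - h • (1 : Module.End K M)) ^ k) x = 0) :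
    f x = h • x := by
  classical
  have hsup : x ∈ ⨆ μ : K, f.eigenspace μ := by
    have hx' : x ∈ Submodule.span K {v : M | ∃ μ : K, f v = μ • v} := hdiag ▸ Submodule.mem_top
    refine Submodule.span_le.mpr ?_ hx'
    rintro v ⟨μ, hv⟩
    exact Submodule.mem_iSup_of_mem μ (Module.End.mem_eigenspace_iff.mpr hv)
  obtain ⟨c, hc, hsum⟩ := (Submodule.mem_iSup_iff_exists_finsupp _ x).mp hsup
  have hceig : ∀ μ, f (c μ) = μ • c μ := fun μ => Module.End.mem_eigenspace_iff.mp (hc μ)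
  set d : K →₀ M := Finsupp.onFinset c.support (fun μ => (μ - h) ^ k • c μ)
    (fun μ hμ => Finsupp.mem_support_iff.mpr fun hc0 => hμ (by simp [hc0])) with hd_def
  have hd : ∀ μ, d μ = (μ - h) ^ k • c μ := fun μ => rfl
  have hdsum : (d.sum fun _ x => x) = 0 := by
    have e1 : (d.sum fun _ x => x) = ∑ μ ∈ c.support, d μ :=
      Finsupp.sum_of_support_subset d Finsupp.support_onFinset_subset _ (fun _ _ => rfl)
    have e2 : ((f - h • (1 : Module.End K M)) ^ k) x = ∑ μ ∈ c.support, d μ := by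
      rw [← hsum, Finsupp.sum, map_sum]
      exact Finset.sum_congr rfl fun μ _ => by rw [pow_on_eigvec f μ h _ (hceig μ), hd]
    rw [e1, ← e2, hx]
  have hzero : ∀ μ, (μ - h) ^ k • c μ = 0 := fun μ => by
    rw [← hd]; exact eq_zero_of_indep f.eigenspace f.eigenspaces_iSupIndep d
      (fun μ => by rw [hd]; exact Submodule.smul_mem _ _ (hc μ)) hdsum μ
  have hcne : ∀ μ, μ ≠ h → c μ = 0 := by
    intro μ hμ
    have := hzero μ
    rw [smul_eq_zero] at this
    rcases this with h0 | h0
    · exact absurd h0 (pow_ne_zero _ (sub_ne_zero_of_ne hμ))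
    · exact h0
  have : (f - h • (1 : Module.End K M)) x = 0 := by
    rw [← hsum, Finsupp.sum, map_sum]
    refine Finset.sum_eq_zero fun μ _ => ?_
    have h1 : (f - h • (1 : Module.End K M)) (c μ) = (μ - h) • c μ := by
      simp [LinearMap.sub_apply, hceig μ, sub_smul]
    rw [h1]
    by_cases hμ : μ = h
    · rw [hμ, sub_self, zero_smul]
    · rw [hcne μ hμ, smul_zero]
  have h2 : f x - h • x = 0 := by simpa [LinearMap.sub_apply] using this
  exact sub_eq_zero.mp h2

end Aux

/-- Let `T` be an endomorphism of a `K`-vector space `V` and `W` a `T`-invariant subspace.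
If `T` is diagonalizable on `W` (i.e. `W` is spanned by eigenvectors of `T`) and the induced
endomorphism of `V/W` is diagonalizable, then every vector of `V` is annihilated by a product
of operators `(T − λ)²`, and for each `h` the `h`-eigenspace of `V/W` is the image of the
generalized `h`-eigenspace of `V`. -/
theorem stmt2 (K : Type*) [Field K] (V : Type*) [AddCommGroup V] [Module K V]
    (T : Module.End K V) (W : Submodule K V) (hW : W ≤ W.comap T)
    (hWdiag : W = Submodule.span K {v : V | v ∈ W ∧ ∃ μ : K, T v = μ • v})
    (hQdiag : (⊤ : Submodule K (V ⧸ W)) =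
      Submodule.span K {v : V ⧸ W | ∃ μ : K, Submodule.mapQ W W T hW v = μ • v}) :
    (∀ v : V, ∃ s : List K,
      (s.map (fun μ => (T - μ • (1 : Module.End K V)) ^ 2)).prod v = 0) ∧
    (∀ h : K, {v : V ⧸ W | Submodule.mapQ W W T hW v = h • v}
      = W.mkQ '' {v : V | ∃ k : ℕ, ((T - h • (1 : Module.End K V)) ^ k) v = 0}) := by
  set T' : Module.End K (V ⧸ W) := Submodule.mapQ W W T hW with hT'
  -- compatibility of `lprod` with the quotient map
  have hstep : ∀ (μ : K) (v : V),
      W.mkQ ((T - μ • (1 : Module.End K V)) v) = (T' - μ • 1) (W.mkQ v) := by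
    intro μ v
    simp only [LinearMap.sub_apply, LinearMap.smul_apply, Module.End.one_apply, map_sub, map_smul]
    simp [hT', Submodule.mapQ_apply, Submodule.mkQ_apply]
  have hcompat : ∀ (s : List K) (v : V), W.mkQ (lprod T s v) = lprod T' s (W.mkQ v) := by
    intro s
    induction s with
    | nil => intro v; simp [lprod]
    | cons a s ih =>
      intro v
      have h1 : lprod T (a :: s) = (T - a • 1) * lprod T s := by simp [lprod]
      have h2 : lprod T' (a :: s) = (T' - a • 1) * lprod T' s := by simp [lprod]
      rw [h1, h2, Module.End.mul_apply, Module.End.mul_apply, hstep, ih]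
  -- annihilation of elements of `W`
  have hannW : ∀ w ∈ W, ∃ t : List K, lprod T t w = 0 := by
    intro w hw
    rw [hWdiag] at hw
    exact lprod_ann_of_span T _ (fun v hv => hv.2) hw
  -- powers commute with quotient
  have hpow : ∀ (h : K) (k : ℕ) (v : V),
      W.mkQ (((T - h • (1 : Module.End K V)) ^ k) v) = ((T' - h • 1) ^ k) (W.mkQ v) := by
    intro h k v
    have e1 : lprod T (List.replicate k h) = (T - h • (1 : Module.End K V)) ^ k := by
      simp [lprod, List.map_replicate, List.prod_replicate]
    have e2 : lprod T' (List.replicate k h) = (T' - h • 1) ^ k := by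
      simp [lprod, List.map_replicate, List.prod_replicate]
    rw [← e1, ← e2, hcompat]
  constructor
  · -- part 1
    intro v
    have hv : W.mkQ v ∈ Submodule.span K {x : V ⧸ W | ∃ μ : K, T' x = μ • x} :=
      hQdiag ▸ Submodule.mem_top
    obtain ⟨s, hs⟩ := lprod_ann_of_span T' _ (fun x hx => hx) hv
    have hmem : lprod T s v ∈ W := by
      rw [← Submodule.Quotient.mk_eq_zero]
      have : W.mkQ (lprod T s v) = 0 := by rw [hcompat, hs]
      simpa using this
    obtain ⟨t, ht⟩ := hannW _ hmem
    refine ⟨t ++ s, ?_⟩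
    have hts : lprod T (t ++ s) v = 0 := by
      rw [lprod_append, Module.End.mul_apply, ht]
    rw [lprod_sq, Module.End.mul_apply, hts, map_zero]
  · -- part 2
    intro h
    ext x
    simp only [Set.mem_setOf_eq, Set.mem_image]
    constructor
    · intro hx
      obtain ⟨v0, rfl⟩ := W.mkQ_surjective x
      have hw : (T - h • (1 : Module.End K V)) v0 ∈ W := by
        rw [← Submodule.Quotient.mk_eq_zero]
        have : W.mkQ ((T - h • (1 : Module.End K V)) v0) = 0 := by
          rw [hstep]
          simp only [LinearMap.sub_apply, LinearMap.smul_apply, Module.End.one_apply]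
          rw [hx, sub_self]
        simpa using this
      -- correct by an element of W
      have claim : ∀ w ∈ W, ∃ u, u ∈ W ∧
          (T - h • (1 : Module.End K V)) w = ((T - h • (1 : Module.End K V)) ^ 2) u := by
        intro w hw
        rw [hWdiag] at hw
        induction hw using Submodule.span_induction with
        | mem y hy =>
          obtain ⟨hyW, μ, hμ⟩ := hy
          by_cases hμh : μ = h
          · refine ⟨0, W.zero_mem, ?_⟩
            have : (T - h • (1 : Module.End K V)) y = 0 := by
              simp [LinearMap.sub_apply, hμ, hμh]
            rw [this, map_zero]
          · refine ⟨(μ - h)⁻¹ • y, W.smul_mem _ hyW, ?_⟩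
            have h1 : ∀ k : ℕ, ((T - h • (1 : Module.End K V)) ^ k) y = (μ - h) ^ k • y :=
              pow_on_eigvec T μ h y hμ
            have h2 : (T - h • (1 : Module.End K V)) y = (μ - h) • y := by
              simpa using h1 1
            rw [h2, map_smul, h1 2, smul_smul, pow_two, ← mul_assoc,
              inv_mul_cancel₀ (sub_ne_zero_of_ne hμh), one_mul]
        | zero => exact ⟨0, W.zero_mem, by simp⟩
        | add y z hy hz ihy ihz =>
          obtain ⟨u1, hu1, he1⟩ := ihy
          obtain ⟨u2, hu2, he2⟩ := ihz
          exact ⟨u1 + u2, W.add_mem hu1 hu2, by rw [map_add, map_add, he1, he2]⟩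
        | smul a y hy ihy =>
          obtain ⟨u, hu, he⟩ := ihy
          exact ⟨a • u, W.smul_mem a hu, by rw [map_smul, map_smul, he]⟩
      obtain ⟨u, huW, hu⟩ := claim _ hw
      refine ⟨v0 - u, ⟨2, ?_⟩, ?_⟩
      · rw [map_sub]
        have : ((T - h • (1 : Module.End K V)) ^ 2) v0
            = (T - h • (1 : Module.End K V)) ((T - h • (1 : Module.End K V)) v0) := by
          rw [pow_two, Module.End.mul_apply]
        rw [this, hu, sub_self]
      · rw [map_sub]
        have h0 : W.mkQ u = 0 := by
          simpa [Submodule.mkQ_apply] using (Submodule.Quotient.mk_eq_zero W).mpr huW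
        rw [h0, sub_zero]
    · rintro ⟨v, ⟨k, hk⟩, rfl⟩
      have : ((T' - h • 1) ^ k) (W.mkQ v) = 0 := by
        rw [← hpow, hk, map_zero]
      exact eig_of_gen_of_diag T' hQdiag h (W.mkQ v) k this
end

section
/- Let A = ℚ[x, y]/I where I is the ideal generated by the two polynomials (x − 1)(x − 1/16)(x − 9/16)·y and (70y − 132x² + 65x − 3)·y. Then the element a₊ := −(2¹²/15)·(x − 1)(x − 9/16)·y of A satisfies: a₊² = a₊, x·a₊ = (1/16)·a₊, and y·a₊ = (−1/128)·a₊. -/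
open MvPolynomial

noncomputable section ZhuMOnePlus

/-- Polynomial ring `ℚ[x, y]`. -/
abbrev P2 : Type := MvPolynomial (Fin 2) ℚ

def xx : P2 := X 0
def yy : P2 := X 1

/-- The ideal of relations of Zhu's algebra `A(M(1)⁺)`:
generated by `(x − 1)(x − 1/16)(x − 9/16)·y` and `(70y − 132x² + 65x − 3)·y`. -/
def relI : Ideal P2 := Ideal.span
  { (xx - 1) * (xx - C (1/16)) * (xx - C (9/16)) * yy,
    (C 70 * yy - C 132 * xx ^ 2 + C 65 * xx - C 3) * yy }

/-- Zhu's algebra `A = ℚ[x,y]/I`. -/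
abbrev ZA : Type := P2 ⧸ relI

def xb : ZA := Ideal.Quotient.mk relI xx
def yb : ZA := Ideal.Quotient.mk relI yy

/-- The idempotent `a₊ = −(2¹²/15)(x − 1)(x − 9/16)y`. -/
def aplus : ZA := algebraMap ℚ ZA (-(2 ^ 12 / 15)) * (xb - 1) * (xb - algebraMap ℚ ZA (9/16)) * yb

end ZhuMOnePlus

section Aux

local notation "mkI" => Ideal.Quotient.mk relI

lemma algebraMap_eq_mk (r : ℚ) : algebraMap ℚ ZA r = mkI (C r) := rfl

/-- `aplus` as image of a polynomial. -/
lemma aplus_eq :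
    aplus = mkI (C (-(2 ^ 12 / 15)) * (xx - 1) * (xx - C (9/16)) * yy) := by
  simp only [aplus, xb, yb, algebraMap_eq_mk, map_mul, map_sub, map_one]

lemma mk_sub_mem {p q : P2} (h : p - q ∈ relI) : mkI p = mkI q :=
  Ideal.Quotient.eq.mpr h

lemma mem_relI (p : P2)
    (h : ∃ a b : P2,
      a * ((xx - 1) * (xx - C (1/16)) * (xx - C (9/16)) * yy)
        + b * ((C 70 * yy - C 132 * xx ^ 2 + C 65 * xx - C 3) * yy) = p) :
    p ∈ relI := by
  rw [relI, Ideal.mem_span_pair]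
  exact h

end Aux

/-- In `A = ℚ[x,y]/I`, the element `a₊ = −(2¹²/15)(x−1)(x−9/16)y` satisfies
`a₊² = a₊`, `x·a₊ = (1/16)·a₊`, and `y·a₊ = (−1/128)·a₊`. -/
theorem stmt4 :
    aplus ^ 2 = aplus ∧ xb * aplus = algebraMap ℚ ZA (1/16) * aplus ∧
      yb * aplus = algebraMap ℚ ZA (-(1/128)) * aplus := by
  rw [aplus_eq, xb, yb, algebraMap_eq_mk, algebraMap_eq_mk]
  refine ⟨?_, ?_, ?_⟩
  · rw [← map_pow]
    apply mk_sub_mem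
    apply mem_relI
    refine ⟨C (-86966272/2625) + C (454033408/2625) * xx
        + C (-2206203904/7875) * xx ^ 2 + C (369098752/2625) * xx ^ 3,
      C (294912/875) + C (-65536/35) * xx + C (29917184/7875) * xx ^ 2
        + C (-1048576/315) * xx ^ 3 + C (8388608/7875) * xx ^ 4, ?_⟩
    apply MvPolynomial.funext; intro z
    simp only [map_mul, map_add, map_sub, map_pow, map_neg, map_one,
      map_zero, eval_C, eval_X, xx, yy]
    ring
  · rw [← map_mul, ← map_mul]
    apply mk_sub_mem
    apply mem_relI
    refine ⟨C (-4096/15), 0, ?_⟩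
    apply MvPolynomial.funext; intro z
    simp only [map_mul, map_add, map_sub, map_pow, map_neg, map_one,
      map_zero, eval_C, eval_X, xx, yy]
    ring
  · rw [← map_mul, ← map_mul]
    apply mk_sub_mem
    apply mem_relI
    refine ⟨C (116224/525) + C (-90112/175) * xx,
      C (-384/175) + C (128/21) * xx + C (-2048/525) * xx ^ 2, ?_⟩
    apply MvPolynomial.funext; intro z
    simp only [map_mul, map_add, map_sub, map_pow, map_neg, map_one,
      map_zero, eval_C, eval_X, xx, yy]
    ring
end

section
/- Let A = ℚ[x, y]/I where I is the ideal generated by (x − 1)(x − 1/16)(x − 9/16)·y and (70y − 132x² + 65x − 3)·y. Then the element a := (2⁸/105)·(x − 1/16)(x − 9/16)·y of A satisfies: a² = a, x·a = a, and y·a = a. -/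
open MvPolynomial

noncomputable section ZhuMOnePlus

/-- The idempotent `a = (2⁸/105)(x − 1/16)(x − 9/16)y`. -/
def amid : ZA := algebraMap ℚ ZA (2 ^ 8 / 105) * (xb - algebraMap ℚ ZA (1/16)) * (xb - algebraMap ℚ ZA (9/16)) * yb

end ZhuMOnePlus

section Aux

local notation "q" => algebraMap ℚ ZA

private lemma mkC (r : ℚ) : Ideal.Quotient.mk relI (C r) = q r := rfl

private lemma h1 : (xb - 1) * (xb - q (1/16)) * (xb - q (9/16)) * yb = 0 := by
  have : Ideal.Quotient.mk relI
      ((xx - 1) * (xx - C (1/16)) * (xx - C (9/16)) * yy) = 0 :=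
    Ideal.Quotient.eq_zero_iff_mem.mpr
      (Ideal.subset_span (Set.mem_insert _ _))
  simpa [xb, yb, mkC, map_mul, map_sub, map_one] using this

private lemma h2 : ((70 : ZA) * yb - 132 * xb ^ 2 + 65 * xb - 3) * yb = 0 := by
  have : Ideal.Quotient.mk relI
      ((C 70 * yy - C 132 * xx ^ 2 + C 65 * xx - C 3) * yy) = 0 :=
    Ideal.Quotient.eq_zero_iff_mem.mpr
      (Ideal.subset_span (Set.mem_insert_of_mem _ rfl))
  simpa [xb, yb, mkC, map_mul, map_sub, map_add, map_pow, map_ofNat] using this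

private lemma t16 : (16 : ZA) * q (1/16) = 1 := by
  rw [show (16 : ZA) = q 16 from (map_ofNat _ _).symm, ← map_mul]
  norm_num

private lemma t9 : (16 : ZA) * q (9/16) = 9 := by
  rw [show (16 : ZA) = q 16 from (map_ofNat _ _).symm,
    show (9 : ZA) = q 9 from (map_ofNat _ _).symm, ← map_mul]
  norm_num

private lemma tc : q 105 * q (2 ^ 8 / 105) = 256 := by
  rw [show (256 : ZA) = q 256 from (map_ofNat _ _).symm, ← map_mul]
  norm_num

/-- The "cleared denominators" idempotent. -/
private noncomputable def Az : ZA := (16 * xb - 1) * (16 * xb - 9) * yb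

private lemma h1' : (xb - 1) * Az = 0 := by
  unfold Az
  linear_combination 256 * h1
    + ((xb - 1) * yb * ((16 * xb - 9) - (16 * q (9/16) - 9))) * t16
    + ((xb - 1) * yb * (16 * xb - 1)) * t9

private lemma hA : q 105 * amid = Az := by
  unfold Az amid
  linear_combination
    ((xb - q (1/16)) * (xb - q (9/16)) * yb) * tc
    - ((16 * xb - 1) * yb) * t9
    - ((16 * xb - 9) * yb - (16 * q (9/16) - 9) * yb) * t16

private lemma sm (r : ℚ) (z : ZA) : r • z = q r * z := Algebra.smul_def r z

private lemma amid_eq : amid = (1/105 : ℚ) • Az := by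
  rw [sm, ← hA, show ((q (1/105) : ZA)) * (q 105 * amid) = (q (1/105) * q 105) * amid by ring,
    ← map_mul]
  norm_num

private lemma hx : xb * Az = Az := by
  linear_combination h1'

private lemma cancel70 (z w : ZA) (h : (70 : ZA) * z = 70 * w) : z = w := by
  have h' : (70 : ℚ) • z = (70 : ℚ) • w := by
    rw [sm, sm, map_ofNat]; exact h
  calc z = (70⁻¹ : ℚ) • ((70 : ℚ) • z) := by rw [smul_smul]; norm_num
    _ = (70⁻¹ : ℚ) • ((70 : ℚ) • w) := by rw [h']
    _ = w := by rw [smul_smul]; norm_num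

private lemma hy : yb * Az = Az := by
  apply cancel70
  have e1 : (xb - 1) * ((16 * xb - 1) * (16 * xb - 9) * yb) = 0 := h1'
  unfold Az
  linear_combination (67 + 132 * xb) * e1 + (9 - 160 * xb + 256 * xb ^ 2) * h2

private lemma hsq : Az ^ 2 = (105 : ZA) * Az := by
  apply cancel70
  have e1 : (xb - 1) * ((16 * xb - 1) * (16 * xb - 9) * yb) = 0 := h1'
  unfold Az
  linear_combination
    (7323 + 8388 * xb - 3968 * xb ^ 2 + 33792 * xb ^ 3) * e1
    + (81 - 2880 * xb + 30208 * xb ^ 2 - 81920 * xb ^ 3 + 65536 * xb ^ 4) * h2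

private lemma hAz105 : (105 : ZA) * Az = (105 : ℚ) • Az := by
  rw [sm, map_ofNat]

end Aux

set_option synthInstance.maxHeartbeats 1000000 in
/-- In `A = ℚ[x,y]/I`, the element `a = (2⁸/105)(x−1/16)(x−9/16)y` satisfies
`a² = a`, `x·a = a`, and `y·a = a`. -/
theorem stmt6 : amid ^ 2 = amid ∧ xb * amid = amid ∧ yb * amid = amid := by
  refine ⟨?_, ?_, ?_⟩
  · rw [amid_eq, smul_pow, hsq, hAz105, smul_smul]
    norm_num
  · rw [amid_eq, mul_smul_comm, hx]
  · rw [amid_eq, mul_smul_comm, hy]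
end

section
/- Let a, b ∈ ℚ satisfy: (i) a ≡ 0 or ±1/2⁷ (mod (1/2³)ℤ), i.e., 2⁷a is an integer congruent to 0, 1, or −1 modulo 2⁴; (ii) b ≡ 0 or ±1/2⁸ (mod (1/2⁵)ℤ), i.e., 2⁸b is an integer congruent to 0, 1, or −1 modulo 2³; and (iii) 5a² + 9b = 0. Then a ∈ (1/2²)ℤ. -/
/-- 2-adic bootstrapping: if `2⁷a` is an integer congruent to `0, 1` or `−1` mod `2⁴`,
`2⁸b` is an integer congruent to `0, 1` or `−1` mod `2³`, and `5a² + 9b = 0`,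
then `a ∈ (1/2²)ℤ`. -/
theorem stmt14 (a b : ℚ)
    (ha : ∃ m : ℤ, (2 ^ 7 : ℚ) * a = m ∧ (m % 16 = 0 ∨ m % 16 = 1 ∨ m % 16 = 15))
    (hb : ∃ m : ℤ, (2 ^ 8 : ℚ) * b = m ∧ (m % 8 = 0 ∨ m % 8 = 1 ∨ m % 8 = 7))
    (hab : 5 * a ^ 2 + 9 * b = 0) :
    ∃ m : ℤ, a = (m : ℚ) / 2 ^ 2 := by
  obtain ⟨m, hm, hm16⟩ := ha
  obtain ⟨n, hn, hn8⟩ := hb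
  have keyQ : 5 * (m : ℚ) ^ 2 + 576 * (n : ℚ) = 0 := by
    rw [← hm, ← hn]; linear_combination (16384 : ℚ) * hab
  have key : 5 * m ^ 2 + 576 * n = 0 := by exact_mod_cast keyQ
  -- m must be divisible by 16
  have hq : ∃ q : ℤ, m = 16 * q := by
    refine ⟨m / 16, ?_⟩
    rcases hm16 with h | h | h
    · omega
    all_goals
    · exfalso
      obtain ⟨q, hq⟩ : ∃ q : ℤ, m = 16 * q + m % 16 := ⟨m / 16, by omega⟩
      rw [h] at hq
      subst hq
      have hexp : 5 * (16 * q + 1) ^ 2 = 1280 * q ^ 2 + 160 * q + 5 := by ring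
      have hexp' : 5 * (16 * q + 15) ^ 2 = 1280 * q ^ 2 + 2400 * q + 1125 := by ring
      first | rw [hexp] at key | rw [hexp'] at key
      generalize q ^ 2 = t at key
      omega
  obtain ⟨q, rfl⟩ := hq
  -- q must be even
  have hp : ∃ p : ℤ, q = 2 * p := by
    refine ⟨q / 2, ?_⟩
    by_contra hc
    obtain ⟨p, hpq⟩ : ∃ p : ℤ, q = 2 * p + 1 := ⟨q / 2, by omega⟩
    subst hpq
    have hexp : 5 * (16 * (2 * p + 1)) ^ 2 = 5120 * p ^ 2 + 5120 * p + 1280 := by ring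
    rw [hexp] at key
    generalize p ^ 2 = t at key
    omega
  obtain ⟨p, rfl⟩ := hp
  refine ⟨p, ?_⟩
  have : (2 : ℚ) ^ 7 ≠ 0 := by norm_num
  push_cast at hm ⊢
  field_simp
  linarith [hm]
end
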